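/- Assume that for every u ∈ (Kˣ)^g the family m ↦ (ᵀm⋆q⋆m)·(ᵀm⋆u) over m ∈ ℤ^g is summable and θ(u, q) ≠ 0, and assume the real matrix Q := (v(q_{ij}))_{i,j} is invertible (e.g. positive definite). Define Λ(u) := v(θ(u, q)) + (1/4)·ᵀv(u)·Q⁻¹·v(u), where v(x) := −log‖x‖ and v(u) := (v(u₁), …, v(u_g)). Then Λ is invariant under translation by the period lattice: for every u ∈ (Kˣ)^g and every n ∈ ℤ^g, Λ(u·(q⋆2n)) = Λ(u), where u·(q⋆2n) denotes the componentwise product. -/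

import Mathlib

open scoped BigOperators

variable {K : Type*} [NormedField K] {g : ℕ}

/-- `ᵀm⋆u = ∏ₖ uₖ^{mₖ}`. -/
noncomputable def tstar (u : Fin g → Kˣ) (m : Fin g → ℤ) : Kˣ :=
  ∏ k, u k ^ m k

/-- `ᵀm⋆q⋆n = ∏_{i,j} q_{ij}^{mᵢ·nⱼ}`. -/
noncomputable def qform (q : Matrix (Fin g) (Fin g) Kˣ) (m n : Fin g → ℤ) : Kˣ :=
  ∏ i, ∏ j, q i j ^ (m i * n j)

/-- `q⋆n` is the vector whose `i`-th entry is `∏ⱼ q_{ij}^{nⱼ}`. -/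
noncomputable def qstar (q : Matrix (Fin g) (Fin g) Kˣ) (n : Fin g → ℤ) : Fin g → Kˣ :=
  fun i => ∏ j, q i j ^ n j

/-- The theta series `θ(u, q) = ∑_{m ∈ ℤ^g} (ᵀm⋆q⋆m)·(ᵀm⋆u)`. -/
noncomputable def theta (u : Fin g → Kˣ) (q : Matrix (Fin g) (Fin g) Kˣ) : K :=
  ∑' m : Fin g → ℤ, ((qform q m m : K) * (tstar u m : K))

/- ### Auxiliary lemmas -/

lemma units_val_prod {ι : Type*} (s : Finset ι) (f : ι → Kˣ) :
    ((∏ i ∈ s, f i : Kˣ) : K) = ∏ i ∈ s, (f i : K) := by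
  simpa using map_prod (Units.coeHom K) f s

lemma tstar_mul_right (u w : Fin g → Kˣ) (m : Fin g → ℤ) :
    tstar (fun i => u i * w i) m = tstar u m * tstar w m := by
  simp [tstar, mul_zpow, Finset.prod_mul_distrib]

lemma tstar_add (u : Fin g → Kˣ) (m n : Fin g → ℤ) :
    tstar u (m + n) = tstar u m * tstar u n := by
  simp [tstar, zpow_add, Finset.prod_mul_distrib]

lemma tstar_qstar (q : Matrix (Fin g) (Fin g) Kˣ) (c m : Fin g → ℤ) :
    tstar (qstar q c) m = qform q m c := by
  unfold tstar qstar qform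
  refine Finset.prod_congr rfl fun i _ => ?_
  rw [← Finset.prod_zpow]
  refine Finset.prod_congr rfl fun j _ => ?_
  rw [← zpow_mul, mul_comm (c j)]

lemma qform_comm (q : Matrix (Fin g) (Fin g) Kˣ) (hq : ∀ i j, q i j = q j i)
    (m n : Fin g → ℤ) : qform q m n = qform q n m := by
  unfold qform
  rw [Finset.prod_comm]
  exact Finset.prod_congr rfl fun j _ => Finset.prod_congr rfl fun i _ => by
    rw [hq i j, mul_comm (m i)]

lemma qform_add_left (q : Matrix (Fin g) (Fin g) Kˣ) (m n r : Fin g → ℤ) :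
    qform q (m + n) r = qform q m r * qform q n r := by
  simp [qform, add_mul, zpow_add, Finset.prod_mul_distrib]

lemma qform_add_right (q : Matrix (Fin g) (Fin g) Kˣ) (m n r : Fin g → ℤ) :
    qform q m (n + r) = qform q m n * qform q m r := by
  simp [qform, mul_add, zpow_add, Finset.prod_mul_distrib]

lemma qform_two (q : Matrix (Fin g) (Fin g) Kˣ) (m n : Fin g → ℤ) :
    qform q m (fun j => 2 * n j) = qform q m n * qform q m n := by
  simp only [qform, ← Finset.prod_mul_distrib]
  refine Finset.prod_congr rfl fun i _ => Finset.prod_congr rfl fun j _ => ?_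
  rw [← zpow_add]
  ring_nf

lemma log_tstar (u : Fin g → Kˣ) (n : Fin g → ℤ) :
    Real.log ‖(tstar u n : K)‖ = ∑ i, (n i : ℝ) * Real.log ‖(u i : K)‖ := by
  rw [tstar, units_val_prod, norm_prod, Real.log_prod]
  · refine Finset.sum_congr rfl fun i _ => ?_
    rw [Units.val_zpow_eq_zpow_val, norm_zpow, Real.log_zpow]
  · intro i _
    rw [Units.val_zpow_eq_zpow_val, norm_zpow]
    exact zpow_ne_zero _ (norm_ne_zero_iff.mpr (Units.ne_zero _))

lemma log_qform (q : Matrix (Fin g) (Fin g) Kˣ) (m n : Fin g → ℤ) :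
    Real.log ‖(qform q m n : K)‖
      = ∑ i, ∑ j, ((m i : ℝ) * (n j : ℝ)) * Real.log ‖(q i j : K)‖ := by
  rw [qform, units_val_prod, norm_prod, Real.log_prod]
  · refine Finset.sum_congr rfl fun i _ => ?_
    rw [units_val_prod, norm_prod, Real.log_prod]
    · refine Finset.sum_congr rfl fun j _ => ?_
      rw [Units.val_zpow_eq_zpow_val, norm_zpow, Real.log_zpow]
      push_cast; ring
    · intro j _
      rw [Units.val_zpow_eq_zpow_val, norm_zpow]
      exact zpow_ne_zero _ (norm_ne_zero_iff.mpr (Units.ne_zero _))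
  · intro i _
    rw [units_val_prod, norm_prod]
    exact Finset.prod_ne_zero_iff.mpr fun j _ => by
      rw [Units.val_zpow_eq_zpow_val, norm_zpow]
      exact zpow_ne_zero _ (norm_ne_zero_iff.mpr (Units.ne_zero _))

lemma theta_shift (q : Matrix (Fin g) (Fin g) Kˣ) (hq : ∀ i j, q i j = q j i)
    (u : Fin g → Kˣ) (n : Fin g → ℤ) :
    theta (fun i => u i * qstar q (fun j => 2 * n j) i) q
      = (((qform q n n)⁻¹ * (tstar u n)⁻¹ : Kˣ) : K) * theta u q := by
  have key : ∀ m : Fin g → ℤ,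
      (qform q m m : K) * (tstar (fun i => u i * qstar q (fun j => 2 * n j) i) m : K)
        = (((qform q n n)⁻¹ * (tstar u n)⁻¹ : Kˣ) : K)
            * ((qform q (m + n) (m + n) : K) * (tstar u (m + n) : K)) := by
    intro m
    have hu : (qform q m m) * (tstar (fun i => u i * qstar q (fun j => 2 * n j) i) m)
        = ((qform q n n)⁻¹ * (tstar u n)⁻¹)
            * ((qform q (m + n) (m + n)) * (tstar u (m + n))) := by
      apply Units.ext
      rw [tstar_mul_right, tstar_qstar, qform_two, tstar_add,
        qform_add_left, qform_add_right, qform_add_right, qform_comm q hq n m]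
      simp only [Units.val_mul, Units.val_inv_eq_inv_val]
      field_simp
    have := congrArg (Units.val) hu
    simpa [Units.val_mul] using this
  calc theta (fun i => u i * qstar q (fun j => 2 * n j) i) q
      = ∑' m : Fin g → ℤ, (((qform q n n)⁻¹ * (tstar u n)⁻¹ : Kˣ) : K)
          * ((qform q (m + n) (m + n) : K) * (tstar u (m + n) : K)) := tsum_congr key
    _ = (((qform q n n)⁻¹ * (tstar u n)⁻¹ : Kˣ) : K)
          * ∑' m : Fin g → ℤ, ((qform q (m + n) (m + n) : K) * (tstar u (m + n) : K)) :=
        tsum_mul_left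
    _ = (((qform q n n)⁻¹ * (tstar u n)⁻¹ : Kˣ) : K) * theta u q := by
        rw [theta]
        congr 1
        exact (Equiv.addRight n).tsum_eq
          (fun m : Fin g → ℤ => ((qform q m m : K) * (tstar u m : K)))

lemma sum_to_dot (M : Matrix (Fin g) (Fin g) ℝ) (a b : Fin g → ℝ) :
    ∑ i, ∑ j, a i * M i j * b j = dotProduct a (M.mulVec b) := by
  simp only [dotProduct, Matrix.mulVec, Finset.mul_sum]
  exact Finset.sum_congr rfl fun i _ => Finset.sum_congr rfl fun j _ => by ring

lemma dot_swap (M : Matrix (Fin g) (Fin g) ℝ) (hsym : ∀ i j, M i j = M j i)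
    (x y : Fin g → ℝ) :
    dotProduct (M.mulVec x) y = dotProduct x (M.mulVec y) := by
  simp only [dotProduct, Matrix.mulVec, Finset.sum_mul, Finset.mul_sum]
  rw [Finset.sum_comm]
  exact Finset.sum_congr rfl fun i _ => Finset.sum_congr rfl fun j _ => by
    rw [hsym j i]; ring

/-- the function `Λ(u) = v(θ(u,q)) + (1/4)·ᵀv(u)·Q⁻¹·v(u)` is
invariant under translation by the period lattice: `Λ(u·(q⋆2n)) = Λ(u)`. -/
theorem lambda_invariant {K : Type*} [NormedField K] [CompleteSpace K]
    (hna : IsNonarchimedean (norm : K → ℝ))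
    (g : ℕ) (hg : 1 ≤ g)
    (q : Matrix (Fin g) (Fin g) Kˣ) (hq : ∀ i j, q i j = q j i)
    (hsum : ∀ u : Fin g → Kˣ,
      Summable (fun m : Fin g → ℤ => ((qform q m m : K) * (tstar u m : K))))
    (hθ : ∀ u : Fin g → Kˣ, theta u q ≠ 0)
    (Q : Matrix (Fin g) (Fin g) ℝ)
    (hQ : ∀ i j, Q i j = -Real.log ‖(q i j : K)‖)
    (hQinv : IsUnit Q.det)
    (Λ : (Fin g → Kˣ) → ℝ)
    (hΛ : ∀ u : Fin g → Kˣ,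
      Λ u = -Real.log ‖theta u q‖
        + (1 / 4) * ∑ i, ∑ j,
            (-Real.log ‖(u i : K)‖) * Q⁻¹ i j * (-Real.log ‖(u j : K)‖)) :
    ∀ (u : Fin g → Kˣ) (n : Fin g → ℤ),
      Λ (fun i => u i * qstar q (fun j => 2 * n j) i) = Λ u := by
  intro u n
  set v : Fin g → ℝ := fun i => -Real.log ‖(u i : K)‖ with hv
  set d : Fin g → ℝ := fun i => 2 * (n i : ℝ) with hd
  set u' : Fin g → Kˣ := fun i => u i * qstar q (fun j => 2 * n j) i with hu'
  have hQsym : ∀ i j, Q i j = Q j i := fun i j => by rw [hQ, hQ, hq]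
  -- valuation of the translated variable
  have hval : ∀ i, -Real.log ‖(u' i : K)‖ = (v + Q.mulVec d) i := by
    intro i
    have h0 : (u' i : K) = (u i : K) * ((qstar q (fun j => 2 * n j) i : Kˣ) : K) := by
      simp [hu']
    rw [h0, norm_mul, Real.log_mul (by simp) (by simp)]
    have hlog : Real.log ‖((qstar q (fun j => 2 * n j) i : Kˣ) : K)‖
        = ∑ j, (2 * (n j : ℝ)) * Real.log ‖(q i j : K)‖ := by
      rw [qstar, units_val_prod, norm_prod, Real.log_prod
        (fun j _ => by
          rw [Units.val_zpow_eq_zpow_val, norm_zpow]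
          exact zpow_ne_zero _ (norm_ne_zero_iff.mpr (Units.ne_zero _)))]
      refine Finset.sum_congr rfl fun j _ => ?_
      rw [Units.val_zpow_eq_zpow_val, norm_zpow, Real.log_zpow]
      push_cast; ring
    rw [hlog]
    show _ = v i + Q.mulVec d i
    rw [Matrix.mulVec, dotProduct, neg_add, hv]
    congr 1
    rw [← Finset.sum_neg_distrib]
    refine Finset.sum_congr rfl fun j _ => ?_
    rw [hQ, hd]
    ring
  -- valuation of the translated theta
  have hθval : -Real.log ‖theta u' q‖
      = -Real.log ‖theta u q‖
        - (1/4) * dotProduct d (Q.mulVec d)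
        - (1/2) * dotProduct d v := by
    have hed : dotProduct d (Q.mulVec d)
        = 4 * ∑ i, ∑ j, ((n i : ℝ) * (n j : ℝ)) * Q i j := by
      simp only [dotProduct, Matrix.mulVec, hd, Finset.mul_sum]
      exact Finset.sum_congr rfl fun i _ => Finset.sum_congr rfl fun j _ => by ring
    have hev : dotProduct d v = 2 * ∑ i, (n i : ℝ) * v i := by
      simp only [dotProduct, hd, Finset.mul_sum]
      exact Finset.sum_congr rfl fun i _ => by ring
    rw [hu', theta_shift q hq u n, norm_mul,
      Real.log_mul (by simp) (norm_ne_zero_iff.mpr (hθ u)),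
      Units.val_mul, norm_mul, Real.log_mul (by simp) (by simp),
      Units.val_inv_eq_inv_val, Units.val_inv_eq_inv_val, norm_inv, norm_inv,
      Real.log_inv, Real.log_inv, log_qform, log_tstar, hed, hev]
    have e1 : ∀ i j, ((n i : ℝ) * (n j : ℝ)) * Real.log ‖(q i j : K)‖
        = -(((n i : ℝ) * (n j : ℝ)) * Q i j) := fun i j => by rw [hQ]; ring
    have e2 : ∀ i, (n i : ℝ) * Real.log ‖(u i : K)‖ = -((n i : ℝ) * v i) := fun i => by
      rw [hv]; ring
    simp only [e1, e2, Finset.sum_neg_distrib]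
    ring
  -- the quadratic form at the translated variable
  have hquad : ∑ i, ∑ j, (-Real.log ‖(u' i : K)‖) * Q⁻¹ i j * (-Real.log ‖(u' j : K)‖)
      = (∑ i, ∑ j, v i * Q⁻¹ i j * v j)
        + 2 * dotProduct d v + dotProduct d (Q.mulVec d) := by
    simp only [hval]
    rw [sum_to_dot, sum_to_dot]
    have hc1 : Q⁻¹.mulVec (Q.mulVec d) = d := by
      rw [Matrix.mulVec_mulVec, Matrix.nonsing_inv_mul Q hQinv, Matrix.one_mulVec]
    have hc2 : Q.mulVec (Q⁻¹.mulVec v) = v := by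
      rw [Matrix.mulVec_mulVec, Matrix.mul_nonsing_inv Q hQinv, Matrix.one_mulVec]
    rw [Matrix.mulVec_add, hc1, dotProduct_add, add_dotProduct,
      add_dotProduct, dot_swap Q hQsym d (Q⁻¹.mulVec v), hc2,
      dot_swap Q hQsym d d]
    rw [dotProduct_comm v d]
    ring
  rw [hΛ u', hΛ u, hθval, hquad]
  ring
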